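/- arXiv:2011.13661 — 2 statements merged into one kernel-verified Lean document; each statement's English description precedes it below -/
import Mathlib

section
/- Let F ∈ ℝ^{d×d} be a symmetric matrix, G ∈ ℝ^{d×d} a positive semi-definite matrix, and δ ∈ [0,1]. Then tr( G^{δ} F G^{1−δ} F ) ≤ tr( G F² ). -/
/-!
Diagonalise `G = U Λ Uᵀ` with `Λ = diag λ ≥ 0` and put `H = Uᵀ F U`, again symmetric. Then
`tr (G^a F G^b F) = ∑ i j, λᵢ^a λⱼ^b Hᵢⱼ²`. Weighted AM–GM gives
`λᵢ^δ λⱼ^(1-δ) ≤ δ λᵢ + (1-δ) λⱼ`, and since `Hᵢⱼ²` is symmetric in `i, j` the right-hand side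
sums to `∑ i j, λᵢ Hᵢⱼ²`, which is the case `(a, b) = (1, 0)`, i.e. `tr (G F²)`.
-/

open MeasureTheory Filter Matrix

noncomputable section

/-- Mass of a set under a density. -/
def setMass {d : ℕ} (p : EuclideanSpace ℝ (Fin d) → ℝ) (S : Set (EuclideanSpace ℝ (Fin d))) : ℝ :=
  ∫ x in S, p x

/-- `p` is a log-concave probability density on `ℝ^d`. -/
def IsLogConcaveDensity {d : ℕ} (p : EuclideanSpace ℝ (Fin d) → ℝ) : Prop :=
  (∀ x, 0 ≤ p x) ∧ (∫ x, p x = 1) ∧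
    ∀ x y : EuclideanSpace ℝ (Fin d), ∀ t : ℝ, t ∈ Set.Icc (0:ℝ) 1 →
      p (t • x + (1 - t) • y) ≥ p x ^ t * p y ^ (1 - t)

/-- Boundary measure `p⁺(∂S)`. -/
def boundaryMeasure {d : ℕ} (p : EuclideanSpace ℝ (Fin d) → ℝ)
    (S : Set (EuclideanSpace ℝ (Fin d))) : ℝ :=
  Filter.liminf
    (fun ε : ℝ => (setMass p {x | Metric.infDist x S ≤ ε} - setMass p S) / ε)
    (nhdsWithin 0 (Set.Ioi 0))

/-- Isoperimetric coefficient. -/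
def isoperiCoeff {d : ℕ} (p : EuclideanSpace ℝ (Fin d) → ℝ) : ℝ :=
  sInf { r | ∃ S : Set (EuclideanSpace ℝ (Fin d)), MeasurableSet S ∧
    0 < setMass p S ∧ setMass p S < 1 ∧
    r = boundaryMeasure p S / min (setMass p S) (setMass p Sᶜ) }

/-- Mean of a density. -/
def densMean {d : ℕ} (p : EuclideanSpace ℝ (Fin d) → ℝ) : EuclideanSpace ℝ (Fin d) :=
  ∫ x, p x • x

/-- Covariance matrix of a density. -/
def covMatrix {d : ℕ} (p : EuclideanSpace ℝ (Fin d) → ℝ) : Matrix (Fin d) (Fin d) ℝ :=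
  Matrix.of fun i j => ∫ x, p x * ((x i - densMean p i) * (x j - densMean p j))

/-- Spectral norm of a matrix. -/
def specNorm {d : ℕ} (A : Matrix (Fin d) (Fin d) ℝ) : ℝ :=
  ‖Matrix.toEuclideanCLM (𝕜 := ℝ) A‖

/-- The KLS infimum constant over dimension `k`. -/
def psiDim (k : ℕ) : ℝ :=
  sInf { r | ∃ p : EuclideanSpace ℝ (Fin k) → ℝ, IsLogConcaveDensity p ∧
    HasCompactSupport p ∧ r = isoperiCoeff p * Real.sqrt (specNorm (covMatrix p)) }

/-- Real power of a symmetric matrix through its spectral decomposition. -/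
def matRpow {d : ℕ} (A : Matrix (Fin d) (Fin d) ℝ) (r : ℝ) : Matrix (Fin d) (Fin d) ℝ :=
  if hA : A.IsHermitian then
    (hA.eigenvectorUnitary : Matrix (Fin d) (Fin d) ℝ) *
      Matrix.diagonal (fun i => hA.eigenvalues i ^ r) *
      (star (hA.eigenvectorUnitary : Matrix (Fin d) (Fin d) ℝ))
  else 0

/-- The 3-tensor `T_p(A,B,C)` of a density. -/
def ttensor {d : ℕ} (p : EuclideanSpace ℝ (Fin d) → ℝ)
    (A B C : Matrix (Fin d) (Fin d) ℝ) : ℝ :=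
  ∫ x : EuclideanSpace ℝ (Fin d), ∫ y : EuclideanSpace ℝ (Fin d),
    p x * p y *
      (((fun i => x i - densMean p i) ⬝ᵥ A.mulVec (fun i => y i - densMean p i)) *
       ((fun i => x i - densMean p i) ⬝ᵥ B.mulVec (fun i => y i - densMean p i)) *
       ((fun i => x i - densMean p i) ⬝ᵥ C.mulVec (fun i => y i - densMean p i)))

/-- `p` is more log-concave than `N(0, τ⁻¹ I_d)`. -/
def IsMoreLogConcaveThanGauss {d : ℕ} (τ : ℝ) (p : EuclideanSpace ℝ (Fin d) → ℝ) : Prop :=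
  (∀ x, 0 ≤ p x) ∧ (∫ x, p x = 1) ∧
    ∀ x y : EuclideanSpace ℝ (Fin d), ∀ t : ℝ, t ∈ Set.Icc (0:ℝ) 1 →
      p (t • x + (1 - t) • y) * Real.exp (τ * ‖t • x + (1 - t) • y‖ ^ 2 / 2) ≥
        (p x * Real.exp (τ * ‖x‖ ^ 2 / 2)) ^ t *
        (p y * Real.exp (τ * ‖y‖ ^ 2 / 2)) ^ (1 - t)

end

theorem Matrix.IsSymm.trace_diagonal_mul_mul_diagonal_mul {n R : Type*} [Fintype n]
    [DecidableEq n] [CommSemiring R] {H : Matrix n n R} (hH : H.IsSymm) (a b : n → R) :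
    trace (diagonal a * H * diagonal b * H) = ∑ i, ∑ j, a i * b j * H i j ^ 2 := by
  simp only [trace, diag_apply, mul_apply (M := diagonal a * H * diagonal b), mul_diagonal,
    diagonal_mul]
  refine Finset.sum_congr rfl fun i _ => Finset.sum_congr rfl fun j _ => ?_
  rw [hH.apply i j]
  ring

theorem Matrix.IsSymm.sum_rpow_mul_rpow_mul_sq_le {n : Type*} [Fintype n] {H : Matrix n n ℝ}
    (hH : H.IsSymm) {lam : n → ℝ} (hlam : ∀ i, 0 ≤ lam i) {δ : ℝ} (hδ : δ ∈ Set.Icc (0 : ℝ) 1) :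
    ∑ i, ∑ j, lam i ^ δ * lam j ^ (1 - δ) * H i j ^ 2 ≤ ∑ i, ∑ j, lam i * H i j ^ 2 := by
  have hδ' : 0 ≤ 1 - δ := sub_nonneg.2 hδ.2
  have h_swap : ∑ i, ∑ j, lam j * H i j ^ 2 = ∑ i, ∑ j, lam i * H i j ^ 2 := by
    rw [Finset.sum_comm]
    simp only [hH.apply]
  calc ∑ i, ∑ j, lam i ^ δ * lam j ^ (1 - δ) * H i j ^ 2
      ≤ ∑ i, ∑ j, (δ * lam i + (1 - δ) * lam j) * H i j ^ 2 := by
        gcongr with i _ j _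
        exact Real.geom_mean_le_arith_mean2_weighted hδ.1 hδ' (hlam i) (hlam j) (by ring)
    _ = δ * ∑ i, ∑ j, lam i * H i j ^ 2 + (1 - δ) * ∑ i, ∑ j, lam j * H i j ^ 2 := by
        simp only [Finset.mul_sum, ← Finset.sum_add_distrib]
        exact Finset.sum_congr rfl fun i _ => Finset.sum_congr rfl fun j _ => by ring
    _ = ∑ i, ∑ j, lam i * H i j ^ 2 := by
        rw [h_swap]
        ring

theorem Matrix.IsHermitian.isSymm_star_mul_mul {n : Type*} [Fintype n] {F : Matrix n n ℝ}
    (hF : F.IsHermitian) (U : Matrix n n ℝ) : (star U * F * U).IsSymm := by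
  simpa [star_eq_conjTranspose] using isHermitian_conjTranspose_mul_mul U hF

section

variable {d : ℕ} {A : Matrix (Fin d) (Fin d) ℝ} (hA : A.IsHermitian)
include hA

theorem matRpow_eq_of_isHermitian (r : ℝ) :
    matRpow A r = (hA.eigenvectorUnitary : Matrix (Fin d) (Fin d) ℝ) *
      diagonal (fun i => hA.eigenvalues i ^ r) *
        star (hA.eigenvectorUnitary : Matrix (Fin d) (Fin d) ℝ) :=
  dif_pos hA

-- Holds also for singular `A`, since `(0 : ℝ) ^ (0 : ℝ) = 1`.
theorem matRpow_zero : matRpow A 0 = 1 := by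
  simp [matRpow_eq_of_isHermitian hA]

theorem matRpow_one : matRpow A 1 = A := by
  conv_rhs => rw [hA.spectral_theorem]
  simp [matRpow_eq_of_isHermitian hA, Unitary.conjStarAlgAut_apply]

end

theorem trace_matRpow_mul_matRpow_mul {d : ℕ} {A F : Matrix (Fin d) (Fin d) ℝ}
    (hA : A.IsHermitian) (hF : F.IsHermitian) (a b : ℝ) :
    trace (matRpow A a * F * matRpow A b * F) =
      ∑ i, ∑ j, hA.eigenvalues i ^ a * hA.eigenvalues j ^ b *
        (star (hA.eigenvectorUnitary : Matrix (Fin d) (Fin d) ℝ) * F *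
          hA.eigenvectorUnitary) i j ^ 2 := by
  rw [matRpow_eq_of_isHermitian hA, matRpow_eq_of_isHermitian hA]
  set U : Matrix (Fin d) (Fin d) ℝ := ↑hA.eigenvectorUnitary
  have hU : star U * U = 1 := mem_unitaryGroup_iff'.mp hA.eigenvectorUnitary.2
  have hU' : U * star U = 1 := mem_unitaryGroup_iff.mp hA.eigenvectorUnitary.2
  have h_conj : U * diagonal (hA.eigenvalues · ^ a) * star U * F *
        (U * diagonal (hA.eigenvalues · ^ b) * star U) * F =
      U * (diagonal (hA.eigenvalues · ^ a) * (star U * F * U) * diagonal (hA.eigenvalues · ^ b) *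
        (star U * F * U)) * star U := by
    simp only [mul_assoc, hU', mul_one]
  rw [h_conj, trace_mul_comm, ← mul_assoc, hU, one_mul,
    (hF.isSymm_star_mul_mul U).trace_diagonal_mul_mul_diagonal_mul]

/-- trace inequality à la Lieb–Thirring. -/
theorem trace_rpow_inequality {d : ℕ} (F G : Matrix (Fin d) (Fin d) ℝ)
    (hF : F.IsHermitian) (hG : G.PosSemidef) (δ : ℝ) (hδ : δ ∈ Set.Icc (0 : ℝ) 1) :
    Matrix.trace (matRpow G δ * F * matRpow G (1 - δ) * F) ≤ Matrix.trace (G * F ^ 2) := by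
  have hGh := hG.isHermitian
  calc trace (matRpow G δ * F * matRpow G (1 - δ) * F)
      ≤ trace (matRpow G 1 * F * matRpow G 0 * F) := by
        simp only [trace_matRpow_mul_matRpow_mul hGh hF, Real.rpow_one, Real.rpow_zero, mul_one]
        exact (hF.isSymm_star_mul_mul _).sum_rpow_mul_rpow_mul_sq_le hG.eigenvalues_nonneg hδ
    _ = trace (G * F ^ 2) := by
        rw [matRpow_one hGh, matRpow_zero hGh, mul_one, mul_assoc, sq]
end

section
/- Let c ≥ 2 be a real number. Define β_1 = 1/2, β_{ℓ+1} = β_ℓ − β_ℓ²/16, and α_1 = 4, α_{ℓ+1} = 2c · α_ℓ · β_ℓ^{−1/2}. Then for every integer ℓ ≥ 1, α_ℓ ≤ (4c²ℓ)^{ℓ/2}. -/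
open MeasureTheory Filter Matrix

/-!
The map `x ↦ x - x² / 16` is increasing on `(-∞, 8]` and sends `1 / a` above `1 / (a + 1)` for
`a ≥ 1`, so by induction `β ℓ ≥ 1 / (ℓ + 1)`, i.e. `β ℓ ^ (-1/2) ≤ √(ℓ + 1)`. Writing the target as
`(4c²ℓ)^(ℓ/2) = (2c√ℓ)^ℓ`, one step of the `α`-recursion multiplies the bound by at most
`2c√(ℓ + 1)`, and `(2c√ℓ)^ℓ · 2c√(ℓ + 1) ≤ (2c√(ℓ + 1))^(ℓ + 1)`.
-/

lemma sub_sq_div_sixteen_le_of_le {x y : ℝ} (hxy : x ≤ y) (hy : y ≤ 8) :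
    x - x ^ 2 / 16 ≤ y - y ^ 2 / 16 := by
  nlinarith [mul_nonneg (sub_nonneg.2 hxy) (by linarith : (0 : ℝ) ≤ 16 - x - y)]

lemma one_div_add_one_le_one_div_sub {a : ℝ} (ha : 1 ≤ a) :
    1 / (a + 1) ≤ 1 / a - (1 / a) ^ 2 / 16 := by
  have key : 1 / a - (1 / a) ^ 2 / 16 - 1 / (a + 1) = (15 * a - 1) / (16 * a ^ 2 * (a + 1)) := by
    field_simp
    ring
  have : 0 ≤ (15 * a - 1) / (16 * a ^ 2 * (a + 1)) := div_nonneg (by linarith) (by positivity)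
  linarith

lemma rpow_neg_one_half_le_sqrt {x y : ℝ} (hx : 0 < x) (hxy : x⁻¹ ≤ y) :
    x ^ (-(1 : ℝ) / 2) ≤ √y := by
  rw [neg_div, Real.rpow_neg hx.le, ← Real.sqrt_eq_rpow, ← Real.sqrt_inv]
  exact Real.sqrt_le_sqrt hxy

lemma mul_sq_rpow_div_two {c x : ℝ} (hc : 0 ≤ c) (hx : 0 ≤ x) (n : ℕ) :
    (4 * c ^ 2 * x) ^ ((n : ℝ) / 2) = (2 * c * √x) ^ n := by
  have hy : 0 ≤ 2 * c * √x := by positivity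
  rw [show 4 * c ^ 2 * x = (2 * c * √x) ^ 2 by rw [mul_pow, Real.sq_sqrt hx]; ring,
    ← Real.rpow_natCast _ 2, ← Real.rpow_mul hy, ← Real.rpow_natCast]
  congr 1
  push_cast
  ring

lemma mul_pow_sqrt_le_pow_sqrt_succ {c : ℝ} (hc : 0 ≤ c) (n : ℕ) :
    2 * c * (2 * c * √n) ^ n * √(n + 1) ≤ (2 * c * √((n + 1 : ℕ) : ℝ)) ^ (n + 1) := by
  have hsqrt : √(n : ℝ) ≤ √(n + 1) := Real.sqrt_le_sqrt (by linarith)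
  push_cast
  rw [pow_succ]
  calc 2 * c * (2 * c * √n) ^ n * √(n + 1) = (2 * c * √n) ^ n * (2 * c * √(n + 1)) := by ring
    _ ≤ (2 * c * √(n + 1)) ^ n * (2 * c * √(n + 1)) := by gcongr

section BetaRecursion

variable {β : ℕ → ℝ} (hβ1 : β 1 = 1 / 2)
  (hβrec : ∀ ℓ : ℕ, 1 ≤ ℓ → β (ℓ + 1) = β ℓ - β ℓ ^ 2 / 16)
include hβ1 hβrec

lemma beta_mem_Icc : ∀ ℓ : ℕ, 1 ≤ ℓ → β ℓ ∈ Set.Icc (1 / ((ℓ : ℝ) + 1)) (1 / 2) := by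
  intro ℓ hℓ
  induction ℓ, hℓ using Nat.le_induction with
  | base => rw [hβ1]; norm_num
  | succ n hn ih =>
    obtain ⟨hlo, hhi⟩ := ih
    have hn1 : (1 : ℝ) ≤ n + 1 := by simp
    rw [hβrec n hn]
    push_cast
    refine ⟨?_, by nlinarith⟩
    calc 1 / ((n : ℝ) + 1 + 1) ≤ 1 / ((n : ℝ) + 1) - (1 / ((n : ℝ) + 1)) ^ 2 / 16 :=
          one_div_add_one_le_one_div_sub hn1
      _ ≤ β n - β n ^ 2 / 16 := sub_sq_div_sixteen_le_of_le hlo (by linarith)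

lemma beta_rpow_neg_one_half_le_sqrt (ℓ : ℕ) (hℓ : 1 ≤ ℓ) :
    β ℓ ^ (-(1 : ℝ) / 2) ≤ √((ℓ : ℝ) + 1) := by
  have hlo := (beta_mem_Icc hβ1 hβrec ℓ hℓ).1
  have hpos : 0 < β ℓ := lt_of_lt_of_le (by positivity) hlo
  refine rpow_neg_one_half_le_sqrt hpos ?_
  rw [inv_le_comm₀ hpos (by positivity), ← one_div]
  exact hlo

end BetaRecursion

/-- bound on the recursively defined sequence `α_ℓ`. -/
theorem alpha_seq_bound (c : ℝ) (hc : 2 ≤ c) (α β : ℕ → ℝ)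
    (hβ1 : β 1 = 1 / 2) (hβrec : ∀ ℓ : ℕ, 1 ≤ ℓ → β (ℓ + 1) = β ℓ - β ℓ ^ 2 / 16)
    (hα1 : α 1 = 4)
    (hαrec : ∀ ℓ : ℕ, 1 ≤ ℓ → α (ℓ + 1) = 2 * c * α ℓ * β ℓ ^ (-(1 : ℝ) / 2)) :
    ∀ ℓ : ℕ, 1 ≤ ℓ → α ℓ ≤ (4 * c ^ 2 * (ℓ : ℝ)) ^ ((ℓ : ℝ) / 2) := by
  have hc0 : 0 ≤ c := by linarith
  intro ℓ hℓ
  rw [mul_sq_rpow_div_two hc0 (Nat.cast_nonneg ℓ)]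
  induction ℓ, hℓ using Nat.le_induction with
  | base => simp only [hα1, Nat.cast_one, Real.sqrt_one, mul_one, pow_one]; linarith
  | succ n hn ih =>
    calc α (n + 1) = 2 * c * α n * β n ^ (-(1 : ℝ) / 2) := hαrec n hn
      _ ≤ 2 * c * (2 * c * √n) ^ n * √(n + 1) := by
          gcongr
          · exact Real.rpow_nonneg ((beta_mem_Icc hβ1 hβrec n hn).1.trans' (by positivity)) _
          · exact beta_rpow_neg_one_half_le_sqrt hβ1 hβrec n hn
      _ ≤ (2 * c * √((n + 1 : ℕ) : ℝ)) ^ (n + 1) := mul_pow_sqrt_le_pow_sqrt_succ hc0 n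
end
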